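/- arXiv:2602.12580 — 4 statements merged into one kernel-verified Lean document; each statement's English description precedes it below -/
import Mathlib

section
/- Suppose a numerical flux 𝓗(ω, u⁻, u⁺) satisfies the consistency property 𝓗(ω, u, u) = f(u) - ω·u for all u and ω. Then for any cell average ū, grid velocities ω₋, ω₊, cell sizes Δxⁿ > 0, Δx⁽¹⁾ = Δxⁿ + Δt(ω₊ - ω₋) > 0 and time step Δt > 0, the moving-mesh forward-Euler update ū⁽¹⁾ = (Δxⁿ/Δx⁽¹⁾)·ū - (Δt/Δx⁽¹⁾)·[𝓗(ω₊, u₊⁻, u₊⁺) - 𝓗(ω₋, u₋⁻, u₋⁺)] can be rewritten as the convex combination ū⁽¹⁾ = (1/2)·u^{H,-} + (1/2)·u^{H,+}, where u^{H,-} = ū + 2λ·[𝓗(ω₋, u₋⁻, u₋⁺) - 𝓗(ω₋, ū, ū)], u^{H,+} = ū - 2λ·[𝓗(ω₊, u₊⁻, u₊⁺) - 𝓗(ω₊, ū, ū)], and λ = Δt/Δx⁽¹⁾. -/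
/-- The moving-mesh forward-Euler update is a convex combination of two sub-cell schemes. -/
theorem forward_euler_convex_decomposition
    (f : ℝ → ℝ) (H : ℝ → ℝ → ℝ → ℝ)
    (hcons : ∀ ω u : ℝ, H ω u u = f u - ω * u)
    (ubar ωm ωp Δxn Δx1 Δt : ℝ)
    (um_m um_p up_m up_p : ℝ)
    (hΔxn : 0 < Δxn) (hΔt : 0 < Δt)
    (hΔx1 : Δx1 = Δxn + Δt * (ωp - ωm)) (hΔx1pos : 0 < Δx1)
    (u1 uHm uHp lam : ℝ)
    (hlam : lam = Δt / Δx1)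
    (hu1 : u1 = (Δxn / Δx1) * ubar - (Δt / Δx1) * (H ωp up_m up_p - H ωm um_m um_p))
    (huHm : uHm = ubar + 2 * lam * (H ωm um_m um_p - H ωm ubar ubar))
    (huHp : uHp = ubar - 2 * lam * (H ωp up_m up_p - H ωp ubar ubar)) :
    u1 = (1/2) * uHm + (1/2) * uHp := by
  subst hu1 huHm huHp hlam
  rw [hcons, hcons]
  have h1 : Δx1 ≠ 0 := ne_of_gt hΔx1pos
  field_simp
  rw [hΔx1]
  ring
end

section
/- Fix λ > 0, Δx > 0, ω, and a smooth function u with a point x_m in the closed cell [x_j - Δx/2, x_j + Δx/2] with u'(x_m) = 0 and u''(x_m) > 0. Define the quadratic R(x_m) = (x_j - x_m)² + Δx²/12 - 2λ·a·((x_j - x_m)·Δx + Δx²/6), where a = f'(u(x_m)) - ω. Then R attains its minimum at x_m^c = x_j - λ·a·Δx, with minimum value R(x_m^c) = -(Δx²/12)·(6λa - 1)·(2λa + 1). In particular, if λ·|a| ≤ 1/6 then R(x_m) ≥ 0 for all x_m. -/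
/-- The quadratic `R` in the accuracy-preservation analysis: its minimizer, minimum value,
and nonnegativity under the CFL condition `λ|a| ≤ 1/6`. -/
theorem quadratic_R_nonneg (lam Δx xj a : ℝ) (hlam : 0 < lam) (hΔx : 0 < Δx)
    (R : ℝ → ℝ)
    (hR : ∀ xm, R xm = (xj - xm)^2 + Δx^2/12
        - 2 * lam * a * ((xj - xm) * Δx + Δx^2/6)) :
    (∀ xm, R (xj - lam * a * Δx) ≤ R xm) ∧
    R (xj - lam * a * Δx) = -(Δx^2/12) * (6 * lam * a - 1) * (2 * lam * a + 1) ∧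
    (lam * |a| ≤ 1/6 → ∀ xm, 0 ≤ R xm) := by
  have hmin : R (xj - lam * a * Δx)
      = -(Δx^2/12) * (6 * lam * a - 1) * (2 * lam * a + 1) := by
    rw [hR]; ring
  refine ⟨fun xm => ?_, hmin, fun hcfl xm => ?_⟩
  · rw [hR, hR]
    nlinarith [sq_nonneg (xj - xm - lam * a * Δx)]
  · rw [hR]
    have habs : |lam * a| ≤ 1/6 := by
      rw [abs_mul, abs_of_pos hlam]; exact hcfl
    rcases abs_le.mp habs with ⟨h1, h2⟩
    nlinarith [sq_nonneg (xj - xm - lam * a * Δx),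
      mul_nonneg (mul_nonneg (by linarith : (0:ℝ) ≤ 1 - 6 * (lam * a))
        (by linarith : (0:ℝ) ≤ 2 * (lam * a) + 1)) (sq_nonneg Δx)]
end

section
/- Consider the 1D Euler equations with flux F(U) = (m, m²/ρ + p, (E+p)m/ρ), ideal gas pressure p = (γ-1)(E - m²/(2ρ)), 1 < γ ≤ 3, and admissible set G = {U : ρ > 0, p(U) > 0}. Let ω ∈ ℝ and α > 0 satisfy α ≥ |u - ω| + c where u = m/ρ and c = √(γp/ρ) is the sound speed. Then for any U ∈ G, the states Ψ₁(ω,U) = U - (1/α)(F(U) - ωU) and Ψ₂(ω,U) = U + (1/α)(F(U) - ωU) belong to G. -/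
set_option maxHeartbeats 1600000

lemma euler_aux (γ ω α ρ m E s : ℝ)
    (hs : s^2 = 1)
    (hγ1 : 1 < γ)
    (hρ : 0 < ρ)
    (hp : 0 < (γ - 1) * (E - m^2 / (2 * ρ)))
    (hαpos : 0 < α)
    (hα : |m / ρ - ω| + Real.sqrt (γ * ((γ - 1) * (E - m^2 / (2 * ρ))) / ρ) ≤ α) :
    0 < ρ + s * ((1/α) * (m - ω * ρ)) ∧
    0 < (γ - 1) *
        ((E + s * ((1/α) * ((E + (γ - 1) * (E - m^2 / (2 * ρ))) * (m / ρ) - ω * E)))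
          - (m + s * ((1/α) * (m^2 / ρ + (γ - 1) * (E - m^2 / (2 * ρ)) - ω * m)))^2
            / (2 * (ρ + s * ((1/α) * (m - ω * ρ))))) := by
  have hγ' : 0 < γ - 1 := by linarith
  have he : 0 < E - m^2 / (2 * ρ) := by
    rcases mul_pos_iff.mp hp with ⟨_, h⟩ | ⟨h, _⟩
    · exact h
    · linarith
  set c := Real.sqrt (γ * ((γ - 1) * (E - m^2 / (2 * ρ))) / ρ) with hcdef
  have hcarg : 0 < γ * ((γ - 1) * (E - m^2 / (2 * ρ))) / ρ := by positivity
  have hcpos : 0 < c := Real.sqrt_pos.mpr hcarg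
  have hc2 : c ^ 2 = γ * ((γ - 1) * (E - m^2 / (2 * ρ))) / ρ := Real.sq_sqrt hcarg.le
  have habs : |m / ρ - ω| ≤ α - c := by linarith
  have hρ0 : ρ ≠ 0 := hρ.ne'
  have hα0 : α ≠ 0 := hαpos.ne'
  have hmρ : m - ω * ρ = ρ * (m / ρ - ω) := by field_simp
  have hs1 : |s| = 1 := by
    rcases mul_self_eq_one_iff.mp (show s * s = 1 by nlinarith) with h | h <;>
      rw [h] <;> norm_num
  have habs2 : |s * ((1/α) * (m - ω * ρ))| ≤ ρ * (α - c) / α := by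
    rw [hmρ, abs_mul, abs_mul, abs_mul]
    rw [hs1, abs_of_pos (by positivity : (0:ℝ) < 1/α), abs_of_pos hρ, one_mul]
    calc 1/α * (ρ * |m / ρ - ω|) ≤ 1/α * (ρ * (α - c)) := by gcongr
      _ = ρ * (α - c) / α := by ring
  have hD : ρ * (c / α) ≤ ρ + s * ((1/α) * (m - ω * ρ)) := by
    have h1 : -(ρ * (α - c) / α) ≤ s * ((1/α) * (m - ω * ρ)) :=
      neg_le_of_abs_le habs2
    have h2 : ρ * (c / α) = ρ - ρ * (α - c) / α := by field_simp; ring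
    linarith
  set D := ρ + s * ((1/α) * (m - ω * ρ)) with hDdef
  have hDpos : 0 < D := lt_of_lt_of_le (by positivity) hD
  refine ⟨hDpos, ?_⟩
  set N := D^2 * (2*ρ*E - m^2) / ρ^2 - s^2 * ((γ-1)*(E - m^2/(2*ρ)))^2 / α^2 with hNdef
  have hD0 : D ≠ 0 := hDpos.ne'
  have hD0' : ρ + s * ((1/α) * (m - ω * ρ)) ≠ 0 := by rw [← hDdef]; exact hD0
  have hkey1 : 2 * D * (E + s * ((1/α) * ((E + (γ - 1) * (E - m^2 / (2 * ρ))) * (m / ρ) - ω * E)))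
          - (m + s * ((1/α) * (m^2 / ρ + (γ - 1) * (E - m^2 / (2 * ρ)) - ω * m)))^2 = N := by
    rw [hNdef, hDdef]
    field_simp
    ring
  have hXeq : (E + s * ((1/α) * ((E + (γ - 1) * (E - m^2 / (2 * ρ))) * (m / ρ) - ω * E)))
          - (m + s * ((1/α) * (m^2 / ρ + (γ - 1) * (E - m^2 / (2 * ρ)) - ω * m)))^2
            / (2 * D) = N / (2 * D) := by
    rw [← hkey1]
    field_simp
  rw [hXeq]
  have h2e : 0 < 2*ρ*E - m^2 := by
    have : 2*ρ*E - m^2 = 2*ρ*(E - m^2/(2*ρ)) := by field_simp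
    rw [this]; positivity
  have hN : 0 < N := by
    rw [hNdef, hs, one_mul]
    have hD2 : (ρ * (c/α))^2 ≤ D^2 := by
      have := mul_self_le_mul_self (by positivity : (0:ℝ) ≤ ρ * (c/α)) hD
      nlinarith
    have hkey : ((γ-1)*(E - m^2/(2*ρ)))^2 / α^2 < (ρ * (c/α))^2 * (2*ρ*E - m^2) / ρ^2 := by
      have hceq : (ρ * (c/α))^2 * (2*ρ*E - m^2) / ρ^2
          = 2 * γ * (γ-1) * (E - m^2/(2*ρ))^2 / α^2 := by
        have : (ρ * (c/α))^2 = ρ^2 * c^2 / α^2 := by ring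
        rw [this, hc2]
        have h2ρ : 2*ρ*E - m^2 = 2*ρ*(E - m^2/(2*ρ)) := by field_simp
        rw [h2ρ]
        field_simp
      rw [hceq]
      rw [div_lt_div_iff₀ (by positivity) (by positivity)]
      nlinarith [mul_pos (mul_pos (mul_pos hγ' (show (0:ℝ) < γ + 1 by linarith))
        (mul_pos he he)) (mul_pos hαpos hαpos)]
    have hmono : (ρ * (c/α))^2 * (2*ρ*E - m^2) / ρ^2 ≤ D^2 * (2*ρ*E - m^2) / ρ^2 := by
      gcongr
    linarith [hkey, hmono]
  have : (0:ℝ) < 1 * (N / (2*D)) := by positivity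
  positivity

/-- The Lax–Friedrichs building blocks `Ψ₁, Ψ₂` preserve the admissible set of the
1D Euler equations under `α ≥ |u - ω| + c`. -/
theorem euler_psi_preserve (γ ω α ρ m E : ℝ)
    (hγ1 : 1 < γ) (hγ3 : γ ≤ 3)
    (hρ : 0 < ρ)
    (hp : 0 < (γ - 1) * (E - m^2 / (2 * ρ)))
    (hαpos : 0 < α)
    (hα : |m / ρ - ω| + Real.sqrt (γ * ((γ - 1) * (E - m^2 / (2 * ρ))) / ρ) ≤ α) :
    -- Ψ₁(ω,U) = U - (1/α)(F(U) - ωU)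
    (0 < ρ - (1/α) * (m - ω * ρ) ∧
     0 < (γ - 1) *
        ((E - (1/α) * ((E + (γ - 1) * (E - m^2 / (2 * ρ))) * (m / ρ) - ω * E))
          - (m - (1/α) * (m^2 / ρ + (γ - 1) * (E - m^2 / (2 * ρ)) - ω * m))^2
            / (2 * (ρ - (1/α) * (m - ω * ρ)))))
    ∧
    -- Ψ₂(ω,U) = U + (1/α)(F(U) - ωU)
    (0 < ρ + (1/α) * (m - ω * ρ) ∧
     0 < (γ - 1) *
        ((E + (1/α) * ((E + (γ - 1) * (E - m^2 / (2 * ρ))) * (m / ρ) - ω * E))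
          - (m + (1/α) * (m^2 / ρ + (γ - 1) * (E - m^2 / (2 * ρ)) - ω * m))^2
            / (2 * (ρ + (1/α) * (m - ω * ρ))))) := by
  have h1 := euler_aux γ ω α ρ m E (-1) (by norm_num) hγ1 hρ hp hαpos hα
  have h2 := euler_aux γ ω α ρ m E 1 (by norm_num) hγ1 hρ hp hαpos hα
  refine ⟨⟨?_, ?_⟩, ?_, ?_⟩
  · convert h1.1 using 1; ring
  · convert h1.2 using 2 <;> ring
  · convert h2.1 using 1; ring
  · convert h2.2 using 2 <;> ring
end

section
/- Fix parameters γ₁, γ₂ > 1 and π₁, π₂ ≥ 0 with (γ₁ - γ₂)(π₁ - π₂) ≥ 0. For z ∈ [0,1], define γ(z) and π(z) by 1/(γ(z)-1) = z/(γ₁-1) + (1-z)/(γ₂-1) and γ(z)π(z)/(γ(z)-1) = zγ₁π₁/(γ₁-1) + (1-z)γ₂π₂/(γ₂-1). Then the set G of states (ρ₁z, ρ₂(1-z), m, E, z) with 0 ≤ z ≤ 1, ρ = ρ₁z + ρ₂(1-z) > 0, and ρe - π_∞(z) > 0, where ρe = E - m²/(2ρ), is a convex subset of ℝ⁵. -/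
/-- convex combination of positives is positive -/
lemma combo_pos' (a b X Y : ℝ) (ha : 0 ≤ a) (hb : 0 ≤ b) (hab : a + b = 1)
    (hX : 0 < X) (hY : 0 < Y) : 0 < a * X + b * Y := by
  have h1 : a * min X Y ≤ a * X := mul_le_mul_of_nonneg_left (min_le_left _ _) ha
  have h2 : b * min X Y ≤ b * Y := mul_le_mul_of_nonneg_left (min_le_right _ _) hb
  have h3 : a * min X Y + b * min X Y = min X Y := by rw [← add_mul, hab, one_mul]
  have hm : 0 < min X Y := lt_min hX hY
  linarith

/-- convexity of kinetic energy m²/(2ρ) -/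
lemma kinetic_convex' (a b m n p q : ℝ) (ha : 0 ≤ a) (hb : 0 ≤ b) (hab : a + b = 1)
    (hp : 0 < p) (hq : 0 < q) :
    (a * m + b * n) ^ 2 / (2 * (a * p + b * q)) ≤
      a * (m ^ 2 / (2 * p)) + b * (n ^ 2 / (2 * q)) := by
  have hD : 0 < a * p + b * q := combo_pos' a b p q ha hb hab hp hq
  have hab' : b = 1 - a := by linarith
  subst hab'
  have key : a * (m ^ 2 / (2 * p)) + (1 - a) * (n ^ 2 / (2 * q))
      - (a * m + (1 - a) * n) ^ 2 / (2 * (a * p + (1 - a) * q))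
      = (a * (1 - a) * (q * m - p * n) ^ 2)
        / (2 * p * q * (a * p + (1 - a) * q)) := by
    field_simp
    ring
  have h0 : 0 ≤ (a * (1 - a) * (q * m - p * n) ^ 2)
        / (2 * p * q * (a * p + (1 - a) * q)) := by positivity
  linarith [key ▸ h0]

/-- convexity of a Möbius function (pz+q)/(rz+s) when r(ps-qr) ≤ 0 -/
lemma mobius_convex' (p q r s a b z w : ℝ) (ha : 0 ≤ a) (hb : 0 ≤ b) (hab : a + b = 1)
    (hD1 : 0 < r * z + s) (hD2 : 0 < r * w + s) (hkey : r * (p * s - q * r) ≤ 0) :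
    (p * (a * z + b * w) + q) / (r * (a * z + b * w) + s) ≤
      a * ((p * z + q) / (r * z + s)) + b * ((p * w + q) / (r * w + s)) := by
  have hab' : b = 1 - a := by linarith
  subst hab'
  have hD : 0 < r * (a * z + (1 - a) * w) + s := by
    have h : r * (a * z + (1 - a) * w) + s
        = a * (r * z + s) + (1 - a) * (r * w + s) := by ring
    rw [h]; exact combo_pos' a (1 - a) _ _ ha hb (by ring) hD1 hD2
  have key : a * ((p * z + q) / (r * z + s)) + (1 - a) * ((p * w + q) / (r * w + s))
      - (p * (a * z + (1 - a) * w) + q) / (r * (a * z + (1 - a) * w) + s)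
      = a * (1 - a) * (z - w) ^ 2 * (-(r * (p * s - q * r)))
        / ((r * z + s) * (r * w + s) * (r * (a * z + (1 - a) * w) + s)) := by
    rw [← mul_div_assoc, ← mul_div_assoc, div_add_div _ _ hD1.ne' hD2.ne', div_sub_div _ _ (mul_ne_zero hD1.ne' hD2.ne') hD.ne']
    rw [div_eq_div_iff (mul_ne_zero (mul_ne_zero hD1.ne' hD2.ne') hD.ne') (mul_ne_zero (mul_ne_zero hD1.ne' hD2.ne') hD.ne')]
    ring
  have h0 : 0 ≤ a * (1 - a) * (z - w) ^ 2 * (-(r * (p * s - q * r)))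
        / ((r * z + s) * (r * w + s) * (r * (a * z + (1 - a) * w) + s)) := by
    have hk : 0 ≤ -(r * (p * s - q * r)) := by linarith
    positivity
  linarith [key ▸ h0]

/-- convexity of the mixture reference pressure π∞ -/
lemma pi_convex' (γ₁ γ₂ π₁ π₂ : ℝ) (hγ₁ : 1 < γ₁) (hγ₂ : 1 < γ₂)
    (hπ₁ : 0 ≤ π₁) (hπ₂ : 0 ≤ π₂) (hcompat : 0 ≤ (γ₁ - γ₂) * (π₁ - π₂))
    (a b z w : ℝ) (ha : 0 ≤ a) (hb : 0 ≤ b) (hab : a + b = 1)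
    (hz0 : 0 ≤ z) (hz1 : z ≤ 1) (hw0 : 0 ≤ w) (hw1 : w ≤ 1) :
    ((a * z + b * w) * γ₁ * π₁ / (γ₁ - 1) + (1 - (a * z + b * w)) * γ₂ * π₂ / (γ₂ - 1))
      / (1 + ((a * z + b * w) / (γ₁ - 1) + (1 - (a * z + b * w)) / (γ₂ - 1)))
    ≤ a * ((z * γ₁ * π₁ / (γ₁ - 1) + (1 - z) * γ₂ * π₂ / (γ₂ - 1))
        / (1 + (z / (γ₁ - 1) + (1 - z) / (γ₂ - 1))))
      + b * ((w * γ₁ * π₁ / (γ₁ - 1) + (1 - w) * γ₂ * π₂ / (γ₂ - 1))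
        / (1 + (w / (γ₁ - 1) + (1 - w) / (γ₂ - 1)))) := by
  have hg₁ : (0:ℝ) < γ₁ - 1 := by linarith
  have hg₂ : (0:ℝ) < γ₂ - 1 := by linarith
  set p : ℝ := γ₁ * π₁ / (γ₁ - 1) - γ₂ * π₂ / (γ₂ - 1) with hp
  set q : ℝ := γ₂ * π₂ / (γ₂ - 1) with hq
  set r : ℝ := 1 / (γ₁ - 1) - 1 / (γ₂ - 1) with hr
  set s : ℝ := 1 + 1 / (γ₂ - 1) with hs
  have hnum : ∀ u : ℝ, u * γ₁ * π₁ / (γ₁ - 1) + (1 - u) * γ₂ * π₂ / (γ₂ - 1)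
      = p * u + q := by intro u; rw [hp, hq]; ring
  have hden : ∀ u : ℝ, 1 + (u / (γ₁ - 1) + (1 - u) / (γ₂ - 1)) = r * u + s := by
    intro u; rw [hr, hs]; ring
  have hDpos : ∀ u : ℝ, 0 ≤ u → u ≤ 1 → 0 < r * u + s := by
    intro u hu0 hu1
    rw [← hden]
    have h1 : 0 ≤ u / (γ₁ - 1) := div_nonneg hu0 hg₁.le
    have h2 : 0 ≤ (1 - u) / (γ₂ - 1) := div_nonneg (by linarith) hg₂.le
    linarith
  have hkey : r * (p * s - q * r) ≤ 0 := by
    have heq : r * (p * s - q * r)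
        = -((γ₁ - γ₂) * (π₁ - π₂)) * (γ₁ * γ₂) / ((γ₁ - 1) ^ 2 * (γ₂ - 1) ^ 2) := by
      rw [hp, hq, hr, hs]
      field_simp
      ring
    rw [heq]
    apply div_nonpos_of_nonpos_of_nonneg
    · nlinarith [mul_pos (lt_trans one_pos hγ₁) (lt_trans one_pos hγ₂)]
    · positivity
  rw [hnum, hnum, hnum, hden, hden, hden]
  exact mobius_convex' p q r s a b z w ha hb hab
    (hDpos z hz0 hz1) (hDpos w hw0 hw1) hkey

/-- The admissible set of the five-equation two-medium model with stiffened-gas EOS is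
convex, provided `(γ₁-γ₂)(π₁-π₂) ≥ 0`. The state is `U = (z₁ρ₁, z₂ρ₂, ρu, E, z₁)`,
with `ρ = z₁ρ₁ + z₂ρ₂` and mixture reference pressure
`π∞(z) = B(z)/(1 + A(z))`, `A(z) = z/(γ₁-1) + (1-z)/(γ₂-1)`,
`B(z) = zγ₁π₁/(γ₁-1) + (1-z)γ₂π₂/(γ₂-1)`. -/
theorem five_equation_admissible_set_convex
    (γ₁ γ₂ π₁ π₂ : ℝ) (hγ₁ : 1 < γ₁) (hγ₂ : 1 < γ₂)
    (hπ₁ : 0 ≤ π₁) (hπ₂ : 0 ≤ π₂)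
    (hcompat : 0 ≤ (γ₁ - γ₂) * (π₁ - π₂)) :
    Convex ℝ {U : ℝ × ℝ × ℝ × ℝ × ℝ |
      0 ≤ U.2.2.2.2 ∧ U.2.2.2.2 ≤ 1 ∧
      0 < U.1 + U.2.1 ∧
      0 < (U.2.2.2.1 - U.2.2.1^2 / (2 * (U.1 + U.2.1)))
          - (U.2.2.2.2 * γ₁ * π₁ / (γ₁ - 1) + (1 - U.2.2.2.2) * γ₂ * π₂ / (γ₂ - 1))
            / (1 + (U.2.2.2.2 / (γ₁ - 1) + (1 - U.2.2.2.2) / (γ₂ - 1)))} := by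
  rintro ⟨x1, x2, x3, x4, x5⟩ ⟨hx5a, hx5b, hxρ, hxe⟩
    ⟨y1, y2, y3, y4, y5⟩ ⟨hy5a, hy5b, hyρ, hye⟩ a b ha hb hab
  simp only [Set.mem_setOf_eq, Prod.smul_mk, Prod.mk_add_mk, smul_eq_mul] at *
  refine ⟨by positivity, ?_, ?_, ?_⟩
  · have h1 : a * x5 ≤ a := by nlinarith
    have h2 : b * y5 ≤ b := by nlinarith
    linarith
  · have h : a * x1 + b * y1 + (a * x2 + b * y2) = a * (x1 + x2) + b * (y1 + y2) := by
      ring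
    rw [h]
    exact combo_pos' a b _ _ ha hb hab hxρ hyρ
  · have hK : (a * x3 + b * y3) ^ 2 / (2 * (a * x1 + b * y1 + (a * x2 + b * y2)))
        ≤ a * (x3 ^ 2 / (2 * (x1 + x2))) + b * (y3 ^ 2 / (2 * (y1 + y2))) := by
      have h : a * x1 + b * y1 + (a * x2 + b * y2)
          = a * (x1 + x2) + b * (y1 + y2) := by ring
      rw [h]
      exact kinetic_convex' a b x3 y3 (x1 + x2) (y1 + y2) ha hb hab hxρ hyρ
    have hP := pi_convex' γ₁ γ₂ π₁ π₂ hγ₁ hγ₂ hπ₁ hπ₂ hcompat a b x5 y5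
      ha hb hab hx5a hx5b hy5a hy5b
    have hcomb : 0 < a * ((x4 - x3 ^ 2 / (2 * (x1 + x2)))
          - (x5 * γ₁ * π₁ / (γ₁ - 1) + (1 - x5) * γ₂ * π₂ / (γ₂ - 1))
            / (1 + (x5 / (γ₁ - 1) + (1 - x5) / (γ₂ - 1))))
        + b * ((y4 - y3 ^ 2 / (2 * (y1 + y2)))
          - (y5 * γ₁ * π₁ / (γ₁ - 1) + (1 - y5) * γ₂ * π₂ / (γ₂ - 1))
            / (1 + (y5 / (γ₁ - 1) + (1 - y5) / (γ₂ - 1)))) :=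
      combo_pos' a b _ _ ha hb hab hxe hye
    nlinarith [hK, hP, hcomb]
end
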